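/- The real vector space { ω ∈ ℝ^n : ∑_{j=1}^n ω_j Ψ_m(ζ_j) ζ_j^{−k} = 0 for k = 1,…,m−1 } has dimension n − m + 1 and is spanned over ℝ by the circuit vectors { ω^{(J)} : J ⊆ {1,…,n}, |J| = m }. -/

import Mathlib

/-- The node `ζ_j = e^{iθ_j}` on the unit circle. -/
noncomputable def zetaC (θ : ℕ → ℝ) (j : ℕ) : ℂ := Complex.exp (Complex.I * (θ j : ℂ))

/-- `Ψ_m(z) = ∏_{k=1}^m (z - ξ_k)` with `ξ_k = e^{iφ_k}` (1-based indexing). -/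
noncomputable def PsiC (m : ℕ) (φ : ℕ → ℝ) (z : ℂ) : ℂ :=
  ∏ k ∈ Finset.Icc 1 m, (z - Complex.exp (Complex.I * (φ k : ℂ)))

/-- The real circuit vector `ω^{(J)} ∈ ℝⁿ` on the circle. -/
noncomputable def circuitC (n m : ℕ) (θ φ : ℕ → ℝ) (J : Finset (Fin n)) : Fin n → ℝ :=
  fun j => if j ∈ J then
    1 / ((∏ k ∈ Finset.Icc 1 m, Real.sin ((θ ((j : ℕ) + 1) - φ k) / 2)) *
      ∏ j' ∈ J.erase j, Real.sin ((θ ((j : ℕ) + 1) - θ ((j' : ℕ) + 1)) / 2))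
  else 0

lemma exp_sub_exp' (a b : ℝ) :
    Complex.exp (Complex.I * a) - Complex.exp (Complex.I * b)
      = Complex.exp (Complex.I * (((a+b)/2 : ℝ) : ℂ)) * (2 * Complex.I) *
        Complex.sin (((a-b)/2 : ℝ) : ℂ) := by
  have h1 := Complex.cos_sub_cos (a:ℂ) (b:ℂ)
  have h2 := Complex.sin_sub_sin (a:ℂ) (b:ℂ)
  rw [mul_comm Complex.I (a:ℂ), mul_comm Complex.I (b:ℂ), mul_comm Complex.I _,
    Complex.exp_mul_I, Complex.exp_mul_I, Complex.exp_mul_I]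
  push_cast
  linear_combination h1 + Complex.I * h2 - 2*Complex.sin (((a-b))/2)*Complex.sin (((a+b))/2)*Complex.I_sq

lemma prod_exp_sub {ι : Type*} (S : Finset ι) (x : ι → ℝ) (t : ℝ) :
    ∏ i ∈ S, (Complex.exp (Complex.I * t) - Complex.exp (Complex.I * (x i)))
      = Complex.exp (Complex.I * (((S.card * t + ∑ i ∈ S, x i)/2 : ℝ) : ℂ)) *
        (2 * Complex.I)^S.card * ∏ i ∈ S, ((Real.sin ((t - x i)/2) : ℝ) : ℂ) := by
  have : ∀ i ∈ S, Complex.exp (Complex.I * t) - Complex.exp (Complex.I * (x i))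
      = Complex.exp (Complex.I * (((t + x i)/2 : ℝ) : ℂ)) * (2 * Complex.I) *
        ((Real.sin ((t - x i)/2) : ℝ) : ℂ) := by
    intro i _
    rw [exp_sub_exp' t (x i), Complex.ofReal_sin]
  rw [Finset.prod_congr rfl this, Finset.prod_mul_distrib, Finset.prod_mul_distrib,
    ← Complex.exp_sum, Finset.prod_const]
  congr 2
  rw [← Finset.mul_sum]
  congr 1
  push_cast
  rw [← Finset.sum_div, Finset.sum_add_distrib, Finset.sum_const, nsmul_eq_mul]

lemma leadingCoeff_lagrange_basis {F : Type*} [Field F] {ι : Type*} [DecidableEq ι]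
    {J : Finset ι} {x : ι → F} (hx : Set.InjOn x J) {i : ι} (hi : i ∈ J) :
    (Lagrange.basis J x i).leadingCoeff = ∏ j ∈ J.erase i, (x i - x j)⁻¹ := by
  rw [Lagrange.basis, Polynomial.leadingCoeff_prod]
  refine Finset.prod_congr rfl fun j hj => ?_
  rcases Finset.mem_erase.mp hj with ⟨hij, hjJ⟩
  rw [Lagrange.basisDivisor, Polynomial.leadingCoeff_mul, Polynomial.leadingCoeff_C,
    (Polynomial.monic_X_sub_C (x j)).leadingCoeff, mul_one]

lemma lagrange_sum_zero {F : Type*} [Field F] {ι : Type*} [DecidableEq ι] (J : Finset ι)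
    (x : ι → F) (hx : Set.InjOn x J) {d : ℕ} (hd : d + 1 < J.card) :
    ∑ j ∈ J, x j ^ d / ∏ j' ∈ J.erase j, (x j - x j') = 0 := by
  have hdeg : ((Polynomial.X : Polynomial F) ^ d).degree < J.card := by
    rw [Polynomial.degree_X_pow]
    exact_mod_cast (by omega : d < J.card)
  have h := Lagrange.eq_interpolate (v := x) hx hdeg
  have hc := congrArg (fun p : Polynomial F => p.coeff (J.card - 1)) h
  simp only [Lagrange.interpolate_apply, Polynomial.finset_sum_coeff,
    Polynomial.coeff_C_mul, Polynomial.coeff_X_pow] at hc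
  rw [if_neg (by omega)] at hc
  refine Eq.trans (Finset.sum_congr rfl fun i hi => ?_) hc.symm
  have hnd : (Lagrange.basis J x i).natDegree = J.card - 1 := Lagrange.natDegree_basis hx hi
  rw [Polynomial.eval_pow, Polynomial.eval_X, ← hnd, Polynomial.coeff_natDegree,
    leadingCoeff_lagrange_basis hx hi, div_eq_mul_inv, ← Finset.prod_inv_distrib]

/-- The constraint linear map. -/
noncomputable def Lmap (n m : ℕ) (θ φ : ℕ → ℝ) : (Fin n → ℝ) →ₗ[ℝ] (Fin (m-1) → ℂ) where
  toFun ω k := ∑ j : Fin n, (ω j : ℂ) *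
    (PsiC m φ (zetaC θ ((j:ℕ)+1)) * zetaC θ ((j:ℕ)+1) ^ (-(((k:ℕ)+1 : ℕ) : ℤ)))
  map_add' ω1 ω2 := by
    funext k
    simp [add_mul, Finset.sum_add_distrib]
  map_smul' r ω := by
    funext k
    simp [Finset.mul_sum, mul_assoc, Complex.real_smul]

lemma Lmap_apply (n m : ℕ) (θ φ : ℕ → ℝ) (ω : Fin n → ℝ) (k : Fin (m-1)) :
    Lmap n m θ φ ω k = ∑ j : Fin n, (ω j : ℂ) *
      (PsiC m φ (zetaC θ ((j:ℕ)+1)) * zetaC θ ((j:ℕ)+1) ^ (-(((k:ℕ)+1 : ℕ) : ℤ))) := rfl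

lemma circuit_in_ker (n m : ℕ) (θ φ : ℕ → ℝ)
    (hsφ : ∀ j : Fin n, ∀ k, 1 ≤ k → k ≤ m → Real.sin ((θ ((j:ℕ)+1) - φ k)/2) ≠ 0)
    (hsθ : ∀ j j' : Fin n, j ≠ j' → Real.sin ((θ ((j:ℕ)+1) - θ ((j':ℕ)+1))/2) ≠ 0)
    (J : Finset (Fin n)) (hJ : J.card = m) :
    circuitC n m θ φ J ∈ LinearMap.ker (Lmap n m θ φ) := by
  classical
  rw [LinearMap.mem_ker]
  funext k
  have hk : (k:ℕ) < m - 1 := k.isLt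
  have hm2 : 2 ≤ m := by omega
  set z : Fin n → ℂ := fun j => Complex.exp (Complex.I * (θ ((j:ℕ)+1) : ℂ)) with hz
  have hzeta : ∀ j : Fin n, zetaC θ ((j:ℕ)+1) = z j := fun j => rfl
  have hzsub : ∀ j j' : Fin n, j ≠ j' → z j - z j' ≠ 0 := by
    intro j j' hne
    rw [hz]
    simp only
    rw [exp_sub_exp']
    exact mul_ne_zero (mul_ne_zero (Complex.exp_ne_zero _)
      (by simp [Complex.I_ne_zero])) (by
        rw [← Complex.ofReal_sin, Complex.ofReal_ne_zero]
        exact hsθ j j' hne)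
  have hzinj : Set.InjOn z J := by
    intro a _ b _ hab
    by_contra hne
    exact hzsub a b hne (sub_eq_zero_of_eq hab)
  have hzne : ∀ j : Fin n, z j ≠ 0 := fun j => Complex.exp_ne_zero _
  -- abbreviations
  set d : ℕ := m - 2 - (k:ℕ) with hd
  set Sφ : ℝ := ∑ k ∈ Finset.Icc 1 m, φ k with hSφ
  set SJ : ℝ := ∑ j' ∈ J, θ ((j':ℕ)+1) with hSJ
  set C : ℂ := (2*Complex.I)^(2*m-1) * Complex.exp (Complex.I * (((Sφ + SJ)/2 : ℝ) : ℂ)) with hC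
  have key : ∀ j ∈ J, (circuitC n m θ φ J j : ℂ) *
      (PsiC m φ (zetaC θ ((j:ℕ)+1)) * zetaC θ ((j:ℕ)+1) ^ (-(((k:ℕ)+1 : ℕ) : ℤ)))
      = C * (z j ^ d / ∏ j' ∈ J.erase j, (z j - z j')) := by
    intro j hj
    set t : ℝ := θ ((j:ℕ)+1) with ht
    set A : ℝ := ∏ k' ∈ Finset.Icc 1 m, Real.sin ((t - φ k')/2) with hA
    set B : ℝ := ∏ j' ∈ J.erase j, Real.sin ((t - θ ((j':ℕ)+1))/2) with hB
    set SE : ℝ := ∑ j' ∈ J.erase j, θ ((j':ℕ)+1) with hSE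
    have hAne : A ≠ 0 := Finset.prod_ne_zero_iff.mpr
      (fun k' hk' => hsφ j k' (Finset.mem_Icc.mp hk').1 (Finset.mem_Icc.mp hk').2)
    have hBne : B ≠ 0 := Finset.prod_ne_zero_iff.mpr
      (fun j' hj' => hsθ j j' (Ne.symm (Finset.mem_erase.mp hj').1))
    have hcirc : circuitC n m θ φ J j = 1/(A*B) := by
      simp only [circuitC, if_pos hj]
      rfl
    have hΨ : PsiC m φ (z j)
        = Complex.exp (Complex.I * (((m*t + Sφ)/2 : ℝ):ℂ)) * (2*Complex.I)^m * (A:ℂ) := by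
      have h := prod_exp_sub (Finset.Icc 1 m) φ t
      rw [Nat.card_Icc, Nat.add_sub_cancel] at h
      rw [hA, Complex.ofReal_prod]
      exact h
    have hprod : ∏ j' ∈ J.erase j, (z j - z j')
        = Complex.exp (Complex.I * (((((m-1:ℕ)):ℝ)*t + SE)/2 : ℝ):ℂ) * (2*Complex.I)^(m-1) * (B:ℂ) := by
      have h := prod_exp_sub (J.erase j) (fun j' => θ ((j':ℕ)+1)) t
      rw [Finset.card_erase_of_mem hj, hJ] at h
      rw [hB, Complex.ofReal_prod]
      exact h
    have hSJE : SJ = t + SE := (Finset.add_sum_erase J _ hj).symm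
    have hzpow1 : z j ^ (d:ℕ) = Complex.exp (Complex.I * ((d*t : ℝ):ℂ)) := by
      rw [hz]
      simp only
      rw [← Complex.exp_nat_mul]
      congr 1
      push_cast
      ring
    have hzpow2 : z j ^ (-(((k:ℕ)+1 : ℕ)):ℤ)
        = (Complex.exp (Complex.I * ((((k:ℕ)+1)*t : ℝ):ℂ)))⁻¹ := by
      rw [zpow_neg, zpow_natCast, hz]
      simp only
      rw [← Complex.exp_nat_mul]
      congr 2
      push_cast
      ring
    have hm1R : (((m-1:ℕ)):ℝ) = (m:ℝ) - 1 := by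
      have : (1:ℕ) ≤ m := by omega
      push_cast [this]
      ring
    have hdR : ((d:ℕ):ℝ) = (m:ℝ) - 2 - (k:ℕ) := by
      have h2 : 2 + (k:ℕ) ≤ m := by omega
      rw [hd, Nat.sub_sub, Nat.cast_sub h2]
      push_cast
      ring
    have hreal : (m*t + Sφ)/2 + ((((m-1:ℕ)):ℝ)*t + SE)/2
        = (Sφ + SJ)/2 + (d:ℕ)*t + ((k:ℕ)+1)*t := by
      rw [hm1R, hdR, hSJE]
      ring
    have hscalar : Complex.exp (Complex.I * (((m*t + Sφ)/2 : ℝ):ℂ)) *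
        Complex.exp (Complex.I * (((((m-1:ℕ)):ℝ)*t + SE)/2 : ℝ):ℂ)
        = Complex.exp (Complex.I * (((Sφ + SJ)/2 : ℝ):ℂ)) *
          Complex.exp (Complex.I * ((d*t : ℝ):ℂ)) *
          Complex.exp (Complex.I * ((((k:ℕ)+1)*t : ℝ):ℂ)) := by
      calc Complex.exp (Complex.I * (((m*t + Sφ)/2 : ℝ):ℂ)) *
          Complex.exp (Complex.I * (((((m-1:ℕ)):ℝ)*t + SE)/2 : ℝ):ℂ)
          = Complex.exp (Complex.I * ((((m*t + Sφ)/2 + (((m-1:ℕ)):ℝ)*t/2 + SE/2) : ℝ):ℂ)) := by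
            rw [← Complex.exp_add]
            congr 1
            push_cast
            ring
        _ = Complex.exp (Complex.I * ((((Sφ + SJ)/2 + (d:ℕ)*t + ((k:ℕ)+1)*t) : ℝ):ℂ)) := by
            congr 2
            rw [← hreal]
            ring
        _ = Complex.exp (Complex.I * (((Sφ + SJ)/2 : ℝ):ℂ)) *
          Complex.exp (Complex.I * ((d*t : ℝ):ℂ)) *
          Complex.exp (Complex.I * ((((k:ℕ)+1)*t : ℝ):ℂ)) := by
            rw [← Complex.exp_add, ← Complex.exp_add]
            congr 1
            push_cast
            ring
    have hP : (2*Complex.I)^m * (2*Complex.I)^(m-1) = (2*Complex.I)^(2*m-1) := by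
      rw [← pow_add]
      congr 1
      omega
    rw [hcirc, hzeta j, hΨ, hzpow2, hprod, hzpow1, hC]
    have hPne : (2*Complex.I) ≠ 0 := by simp [Complex.I_ne_zero]
    have hAC : (A:ℂ) ≠ 0 := Complex.ofReal_ne_zero.mpr hAne
    have hBC : (B:ℂ) ≠ 0 := Complex.ofReal_ne_zero.mpr hBne
    have hE2 : Complex.exp (Complex.I * ((((k:ℕ)+1)*t : ℝ):ℂ)) ≠ 0 := Complex.exp_ne_zero _
    have hE5 : Complex.exp (Complex.I * (((((m-1:ℕ)):ℝ)*t + SE)/2 : ℝ):ℂ) ≠ 0 := Complex.exp_ne_zero _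
    have hPm : (2*Complex.I)^(m-1) ≠ 0 := pow_ne_zero _ hPne
    clear_value z d Sφ SJ C t A B SE
    clear hsφ hsθ hzsub hzinj hzne hzpow1 hzpow2 hΨ hprod hcirc hreal hm1R hdR hSJE hz hzeta
    set P : ℂ := 2*Complex.I with hPdef
    set E1 : ℂ := Complex.exp (Complex.I * (((m*t + Sφ)/2 : ℝ):ℂ)) with hE1def
    set E2 : ℂ := Complex.exp (Complex.I * ((((k:ℕ)+1)*t : ℝ):ℂ)) with hE2def
    set E3 : ℂ := Complex.exp (Complex.I * (((Sφ + SJ)/2 : ℝ):ℂ)) with hE3def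
    set E4 : ℂ := Complex.exp (Complex.I * ((d*t : ℝ):ℂ)) with hE4def
    set E5 : ℂ := Complex.exp (Complex.I * (((((m-1:ℕ)):ℝ)*t + SE)/2 : ℝ):ℂ) with hE5def
    clear_value P E1 E2 E3 E4 E5
    rw [show ((1/(A*B):ℝ):ℂ) = ((A:ℂ))⁻¹ * ((B:ℂ))⁻¹ from by push_cast; rw [one_div, mul_inv]]
    rw [show ((A:ℂ))⁻¹ * ((B:ℂ))⁻¹ * (E1 * P^m * (A:ℂ) * E2⁻¹) = (E1*P^m)/((B:ℂ)*E2) from by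
      rw [div_eq_mul_inv, mul_inv]
      linear_combination (((B:ℂ))⁻¹ * E2⁻¹ * E1 * P^m) * inv_mul_cancel₀ hAC]
    rw [← mul_div_assoc]
    rw [div_eq_div_iff (mul_ne_zero hBC hE2) (mul_ne_zero (mul_ne_zero hE5 hPm) hBC)]
    linear_combination ((B:ℂ) * (P^m * P^(m-1))) * hscalar + ((B:ℂ) * (E3*E4*E2)) * hP
  rw [Lmap_apply]
  rw [← Finset.sum_subset (Finset.subset_univ J) (fun x _ hx => by
    simp [circuitC, hx])]
  rw [Finset.sum_congr rfl key, ← Finset.mul_sum]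
  rw [lagrange_sum_zero J z hzinj (by omega : d + 1 < J.card), mul_zero]
  rfl

lemma ker_finrank_le (n m : ℕ) (hm : 1 ≤ m) (hmn : m < n) (θ φ : ℕ → ℝ)
    (hsφ : ∀ j : Fin n, ∀ k, 1 ≤ k → k ≤ m → Real.sin ((θ ((j:ℕ)+1) - φ k)/2) ≠ 0)
    (hsθ : ∀ j j' : Fin n, j ≠ j' → Real.sin ((θ ((j:ℕ)+1) - θ ((j':ℕ)+1))/2) ≠ 0) :
    Module.finrank ℝ (LinearMap.ker (Lmap n m θ φ)) ≤ n - m + 1 := by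
  classical
  have hrn := LinearMap.finrank_range_add_finrank_ker (Lmap n m θ φ)
  rw [Module.finrank_fintype_fun_eq_card, Fintype.card_fin] at hrn
  suffices h : m - 1 ≤ Module.finrank ℝ (LinearMap.range (Lmap n m θ φ)) by omega
  -- the nodes
  set z : Fin n → ℂ := fun j => zetaC θ ((j:ℕ)+1) with hz
  have hzsub : ∀ j j' : Fin n, j ≠ j' → z j - z j' ≠ 0 := by
    intro j j' hne
    show zetaC θ ((j:ℕ)+1) - zetaC θ ((j':ℕ)+1) ≠ 0
    rw [zetaC, zetaC, exp_sub_exp']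
    exact mul_ne_zero (mul_ne_zero (Complex.exp_ne_zero _)
      (by simp [Complex.I_ne_zero])) (by
        rw [← Complex.ofReal_sin, Complex.ofReal_ne_zero]
        exact hsθ j j' hne)
  have hzne : ∀ j : Fin n, z j ≠ 0 := fun j => Complex.exp_ne_zero _
  have hΨne : ∀ j : Fin n, PsiC m φ (z j) ≠ 0 := by
    intro j
    rw [PsiC]
    refine Finset.prod_ne_zero_iff.mpr fun k hk => ?_
    rcases Finset.mem_Icc.mp hk with ⟨h1, h2⟩
    show zetaC θ ((j:ℕ)+1) - Complex.exp (Complex.I * (φ k : ℂ)) ≠ 0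
    rw [zetaC, exp_sub_exp']
    exact mul_ne_zero (mul_ne_zero (Complex.exp_ne_zero _)
      (by simp [Complex.I_ne_zero])) (by
        rw [← Complex.ofReal_sin, Complex.ofReal_ne_zero]
        exact hsφ j k h1 h2)
  -- the embedded indices
  set emb : Fin (m-1) → Fin n := fun r => Fin.castLE (by omega) r with hemb
  have hembinj : Function.Injective emb := Fin.castLE_injective _
  -- the matrix
  set M : Matrix (Fin (m-1)) (Fin (m-1)) ℂ :=
    Matrix.of (fun r k => (PsiC m φ (z (emb r)) * (z (emb r))⁻¹) *
      Matrix.vandermonde (fun r' => (z (emb r'))⁻¹) r k) with hM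
  have hdet : M.det ≠ 0 := by
    rw [hM, Matrix.det_mul_column, Matrix.det_vandermonde]
    refine mul_ne_zero (Finset.prod_ne_zero_iff.mpr fun r _ =>
      mul_ne_zero (hΨne _) (inv_ne_zero (hzne _))) ?_
    refine Finset.prod_ne_zero_iff.mpr fun i _ => Finset.prod_ne_zero_iff.mpr fun jj hjj => ?_
    rw [sub_ne_zero]
    intro hEq
    have hzz : z (emb jj) = z (emb i) := by
      have := congrArg (·⁻¹) hEq
      simpa [inv_inv] using this
    have hne : emb jj ≠ emb i := by
      intro h
      have : jj = i := hembinj h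
      subst this
      exact absurd (Finset.mem_Ioi.mp hjj) (lt_irrefl _)
    exact hzsub (emb jj) (emb i) hne (sub_eq_zero_of_eq hzz)
  -- rows are ℂ-independent
  have hrowsC : LinearIndependent ℂ (fun r => M r) :=
    Matrix.linearIndependent_rows_iff_isUnit.mpr
      ((Matrix.isUnit_iff_isUnit_det M).mpr (isUnit_iff_ne_zero.mpr hdet))
  have hrowsR : LinearIndependent ℝ (fun r => M r) := by
    refine hrowsC.restrict_scalars ?_
    intro a b hab
    simpa [Complex.real_smul] using hab
  -- rows are the images of basis vectors
  have hMrow : ∀ r, M r = Lmap n m θ φ (Pi.single (emb r) (1:ℝ)) := by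
    intro r
    funext k
    rw [Lmap_apply]
    rw [Finset.sum_eq_single (emb r)]
    · rw [show ((Pi.single (emb r) (1:ℝ) : Fin n → ℝ) (emb r)) = (1:ℝ) from
        Pi.single_eq_same _ _, Complex.ofReal_one, one_mul, hM]
      have hzz : zetaC θ (((emb r):ℕ)+1) = z (emb r) := rfl
      rw [hzz]
      simp only [Matrix.of_apply, Matrix.vandermonde]
      rw [zpow_neg, zpow_natCast, pow_succ, mul_inv, mul_assoc]
      ring_nf
    · intro b _ hb
      simp [Pi.single_apply, hb]
    · intro h
      exact absurd (Finset.mem_univ _) h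
  have hLind : LinearIndependent ℝ (fun r => Lmap n m θ φ (Pi.single (emb r) (1:ℝ))) := by
    convert hrowsR using 1
    funext r
    exact (hMrow r).symm
  have hle : Submodule.span ℝ (Set.range (fun r => Lmap n m θ φ (Pi.single (emb r) (1:ℝ))))
      ≤ LinearMap.range (Lmap n m θ φ) := by
    rw [Submodule.span_le]
    rintro _ ⟨r, rfl⟩
    exact ⟨_, rfl⟩
  calc m - 1 = Module.finrank ℝ (Submodule.span ℝ
        (Set.range (fun r => Lmap n m θ φ (Pi.single (emb r) (1:ℝ))))) := by
        rw [finrank_span_eq_card hLind, Fintype.card_fin]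
    _ ≤ Module.finrank ℝ (LinearMap.range (Lmap n m θ φ)) := Submodule.finrank_mono hle

lemma span_finrank_ge (n m : ℕ) (hm : 1 ≤ m) (hmn : m < n) (θ φ : ℕ → ℝ)
    (hsφ : ∀ j : Fin n, ∀ k, 1 ≤ k → k ≤ m → Real.sin ((θ ((j:ℕ)+1) - φ k)/2) ≠ 0)
    (hsθ : ∀ j j' : Fin n, j ≠ j' → Real.sin ((θ ((j:ℕ)+1) - θ ((j':ℕ)+1))/2) ≠ 0) :
    n - m + 1 ≤ Module.finrank ℝ (Submodule.span ℝ
      {w : Fin n → ℝ | ∃ J : Finset (Fin n), J.card = m ∧ w = circuitC n m θ φ J}) := by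
  classical
  have hnm : n - m + 1 ≤ n := by omega
  set Js : Fin (n-m+1) → Finset (Fin n) := fun t =>
    Finset.univ.map ⟨fun r : Fin m =>
        (⟨(t:ℕ)+(r:ℕ), by have := t.isLt; have := r.isLt; omega⟩ : Fin n),
      fun a b hab => by
        have := congrArg Fin.val hab
        simp only at this
        exact Fin.ext (by omega)⟩ with hJs
  have hJcard : ∀ t, (Js t).card = m := by
    intro t
    rw [hJs]
    simp
  have hmemJs : ∀ (t : Fin (n-m+1)) (x : Fin n),
      x ∈ Js t ↔ (t:ℕ) ≤ (x:ℕ) ∧ (x:ℕ) < (t:ℕ) + m := by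
    intro t x
    rw [hJs]
    simp only [Finset.mem_map, Finset.mem_univ, true_and, Function.Embedding.coeFn_mk]
    constructor
    · rintro ⟨r, rfl⟩
      exact ⟨by show (t:ℕ) ≤ (t:ℕ)+(r:ℕ); omega, by show (t:ℕ)+(r:ℕ) < (t:ℕ) + m; have := r.isLt; omega⟩
    · rintro ⟨h1, h2⟩
      exact ⟨⟨(x:ℕ)-(t:ℕ), by omega⟩, Fin.ext (by show (t:ℕ)+((x:ℕ)-(t:ℕ)) = (x:ℕ); omega)⟩
  set v : Fin (n-m+1) → (Fin n → ℝ) := fun t => circuitC n m θ φ (Js t) with hv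
  have hdiag : ∀ t : Fin (n-m+1), v t (Fin.castLE hnm t) ≠ 0 := by
    intro t
    have hmem : (Fin.castLE hnm t) ∈ Js t := (hmemJs t _).mpr ⟨le_refl _, by simp; omega⟩
    rw [hv]
    simp only [circuitC, if_pos hmem]
    apply one_div_ne_zero
    exact mul_ne_zero
      (Finset.prod_ne_zero_iff.mpr fun k hk =>
        hsφ _ k (Finset.mem_Icc.mp hk).1 (Finset.mem_Icc.mp hk).2)
      (Finset.prod_ne_zero_iff.mpr fun j' hj' =>
        hsθ _ j' (Ne.symm (Finset.mem_erase.mp hj').1))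
  set N : Matrix (Fin (n-m+1)) (Fin (n-m+1)) ℝ :=
    Matrix.of (fun t s => v t (Fin.castLE hnm s)) with hN
  have htri : N.BlockTriangular id := by
    intro s t hst
    show v s (Fin.castLE hnm t) = 0
    rw [hv]
    simp only [circuitC]
    rw [if_neg]
    intro hmem
    have h2 := (hmemJs s _).mp hmem
    have h3 : ((Fin.castLE hnm t : Fin n) : ℕ) = (t:ℕ) := rfl
    rw [h3] at h2
    have : (t:ℕ) < (s:ℕ) := hst
    omega
  have hdet : N.det ≠ 0 := by
    rw [Matrix.det_of_upperTriangular htri]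
    exact Finset.prod_ne_zero_iff.mpr fun t _ => hdiag t
  have hNli : LinearIndependent ℝ (fun t => N t) :=
    Matrix.linearIndependent_rows_iff_isUnit.mpr
      ((Matrix.isUnit_iff_isUnit_det N).mpr (isUnit_iff_ne_zero.mpr hdet))
  set P : (Fin n → ℝ) →ₗ[ℝ] (Fin (n-m+1) → ℝ) :=
    LinearMap.funLeft ℝ ℝ (fun s => Fin.castLE hnm s) with hP
  have hvli : LinearIndependent ℝ v := by
    apply LinearIndependent.of_comp P
    exact hNli
  have hsub : Submodule.span ℝ (Set.range v) ≤ Submodule.span ℝ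
      {w : Fin n → ℝ | ∃ J : Finset (Fin n), J.card = m ∧ w = circuitC n m θ φ J} := by
    apply Submodule.span_le.mpr
    rintro _ ⟨t, rfl⟩
    exact Submodule.subset_span ⟨Js t, hJcard t, rfl⟩
  calc n - m + 1 = Module.finrank ℝ (Submodule.span ℝ (Set.range v)) := by
        rw [finrank_span_eq_card hvli, Fintype.card_fin]
    _ ≤ _ := Submodule.finrank_mono hsub



lemma sin_half_ne_zero {x : ℝ} (h1 : -(2*Real.pi) < x) (h2 : x < 2*Real.pi) (h3 : x ≠ 0) :
    Real.sin (x/2) ≠ 0 := by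
  rcases lt_or_gt_of_ne h3 with h | h
  · have hp : 0 < Real.sin (-(x/2)) :=
      Real.sin_pos_of_pos_of_lt_pi (by linarith) (by linarith)
    rw [Real.sin_neg] at hp
    linarith
  · have hp : 0 < Real.sin (x/2) :=
      Real.sin_pos_of_pos_of_lt_pi (by linarith) (by linarith)
    linarith

lemma mono_of_step (f : ℕ → ℝ) (N : ℕ) (h : ∀ j, 1 ≤ j → j < N → f j < f (j+1)) :
    ∀ a b, 1 ≤ a → a < b → b ≤ N → f a < f b := by
  intro a b ha hab hbN
  induction b with
  | zero => omega
  | succ b ih =>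
    rcases Nat.lt_or_ge a b with h' | h'
    · exact lt_trans (ih h' (by omega)) (h b (by omega) (by omega))
    · have : a = b := by omega
      subst this
      exact h a ha (by omega)




/-- the real vector space
`{ω ∈ ℝⁿ : ∑_j ω_j Ψ_m(ζ_j) ζ_j^{-k} = 0, k = 1,…,m-1}` has dimension `n - m + 1` and is
spanned over `ℝ` by the circuit vectors `ω^{(J)}`, `J ⊆ {1,…,n}`, `|J| = m`. -/
theorem stmt_14 (m n : ℕ) (hm : 1 ≤ m) (hmn : m < n)
    (θ φ : ℕ → ℝ)
    (hφ : ∀ k, 1 ≤ k → k ≤ m → φ k < φ (k + 1))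
    (hφp : φ (m + 1) = φ 1 + 2 * Real.pi)
    (hθ1 : φ 1 < θ 1)
    (hθ : ∀ j, 1 ≤ j → j < n → θ j < θ (j + 1))
    (hθn : θ n < φ 1 + 2 * Real.pi)
    (hθφ : ∀ j k, 1 ≤ j → j ≤ n → 1 ≤ k → k ≤ m → θ j ≠ φ k) :
    {ω : Fin n → ℝ | ∀ k : ℕ, 1 ≤ k → k < m →
        ∑ j : Fin n, (ω j : ℂ) *
          PsiC m φ (zetaC θ ((j : ℕ) + 1)) * zetaC θ ((j : ℕ) + 1) ^ (-(k : ℤ)) = 0}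
      = ↑(Submodule.span ℝ
          {w : Fin n → ℝ | ∃ J : Finset (Fin n), J.card = m ∧ w = circuitC n m θ φ J}) ∧
    Module.finrank ℝ ↥(Submodule.span ℝ
        {w : Fin n → ℝ | ∃ J : Finset (Fin n), J.card = m ∧ w = circuitC n m θ φ J})
      = n - m + 1 := by
  classical
  have hθmono := mono_of_step θ n hθ
  have hφmono := mono_of_step φ (m+1) (fun k h1 h2 => hφ k h1 (by omega))
  have hθin : ∀ j, 1 ≤ j → j ≤ n → φ 1 < θ j ∧ θ j < φ 1 + 2*Real.pi := by
    intro j h1 h2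
    constructor
    · rcases eq_or_lt_of_le h1 with h | h
      · rw [← h]; exact hθ1
      · exact lt_trans hθ1 (hθmono 1 j le_rfl h h2)
    · rcases eq_or_lt_of_le h2 with h | h
      · rw [h]; exact hθn
      · exact lt_trans (hθmono j n h1 h le_rfl) hθn
  have hφin : ∀ k, 1 ≤ k → k ≤ m → φ 1 ≤ φ k ∧ φ k < φ 1 + 2*Real.pi := by
    intro k h1 h2
    constructor
    · rcases eq_or_lt_of_le h1 with h | h
      · rw [← h]
      · exact le_of_lt (hφmono 1 k le_rfl h (by omega))
    · rw [← hφp]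
      exact hφmono k (m+1) h1 (by omega) le_rfl
  have hsφ : ∀ j : Fin n, ∀ k, 1 ≤ k → k ≤ m →
      Real.sin ((θ ((j:ℕ)+1) - φ k)/2) ≠ 0 := by
    intro j k h1 h2
    have hj1 : 1 ≤ (j:ℕ)+1 := by omega
    have hj2 : (j:ℕ)+1 ≤ n := by have := j.isLt; omega
    obtain ⟨a1, a2⟩ := hθin _ hj1 hj2
    obtain ⟨b1, b2⟩ := hφin k h1 h2
    exact sin_half_ne_zero (by linarith) (by linarith)
      (sub_ne_zero_of_ne (hθφ _ k hj1 hj2 h1 h2))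
  have hsθ : ∀ j j' : Fin n, j ≠ j' →
      Real.sin ((θ ((j:ℕ)+1) - θ ((j':ℕ)+1))/2) ≠ 0 := by
    intro j j' hne
    have hj1 : 1 ≤ (j:ℕ)+1 := by omega
    have hj2 : (j:ℕ)+1 ≤ n := by have := j.isLt; omega
    have hj1' : 1 ≤ (j':ℕ)+1 := by omega
    have hj2' : (j':ℕ)+1 ≤ n := by have := j'.isLt; omega
    obtain ⟨a1, a2⟩ := hθin _ hj1 hj2
    obtain ⟨b1, b2⟩ := hθin _ hj1' hj2'
    have hvne : (j:ℕ) ≠ (j':ℕ) := fun h => hne (Fin.ext h)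
    have hne2 : θ ((j:ℕ)+1) ≠ θ ((j':ℕ)+1) := by
      rcases Nat.lt_or_ge (j:ℕ) (j':ℕ) with h | h
      · exact ne_of_lt (hθmono _ _ hj1 (by omega) hj2')
      · exact ne_of_gt (hθmono _ _ hj1' (by omega) hj2)
    exact sin_half_ne_zero (by linarith) (by linarith) (sub_ne_zero_of_ne hne2)
  -- the three main facts
  have h1 : Submodule.span ℝ
        {w : Fin n → ℝ | ∃ J : Finset (Fin n), J.card = m ∧ w = circuitC n m θ φ J}
      ≤ LinearMap.ker (Lmap n m θ φ) := by
    rw [Submodule.span_le]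
    rintro w ⟨J, hJ, rfl⟩
    exact circuit_in_ker n m θ φ hsφ hsθ J hJ
  have h2 := ker_finrank_le n m hm hmn θ φ hsφ hsθ
  have h3 := span_finrank_ge n m hm hmn θ φ hsφ hsθ
  have h4 := Submodule.finrank_mono h1
  have hVrank : Module.finrank ℝ ↥(Submodule.span ℝ
      {w : Fin n → ℝ | ∃ J : Finset (Fin n), J.card = m ∧ w = circuitC n m θ φ J})
      = n - m + 1 := le_antisymm (h4.trans h2) h3
  have hVK : Submodule.span ℝ
        {w : Fin n → ℝ | ∃ J : Finset (Fin n), J.card = m ∧ w = circuitC n m θ φ J}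
      = LinearMap.ker (Lmap n m θ φ) :=
    Submodule.eq_of_le_of_finrank_le h1 (h2.trans h3)
  have hmatch : ∀ (ω : Fin n → ℝ) (kk : ℕ),
      (∑ j : Fin n, (ω j : ℂ) * PsiC m φ (zetaC θ ((j:ℕ)+1)) *
          zetaC θ ((j:ℕ)+1) ^ (-(kk:ℤ)))
      = ∑ j : Fin n, (ω j:ℂ) * (PsiC m φ (zetaC θ ((j:ℕ)+1)) *
          zetaC θ ((j:ℕ)+1) ^ (-(kk:ℤ))) :=
    fun ω kk => Finset.sum_congr rfl (fun j _ => mul_assoc _ _ _)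
  have hset : ∀ ω : Fin n → ℝ, (ω ∈ LinearMap.ker (Lmap n m θ φ)) ↔
      (∀ k:ℕ, 1 ≤ k → k < m → ∑ j : Fin n, (ω j:ℂ) *
        PsiC m φ (zetaC θ ((j:ℕ)+1)) * zetaC θ ((j:ℕ)+1) ^ (-(k:ℤ)) = 0) := by
    intro ω
    rw [LinearMap.mem_ker, funext_iff]
    constructor
    · intro h k hk1 hkm
      have h2' := h ⟨k-1, by omega⟩
      rw [Lmap_apply] at h2'
      simp only [Pi.zero_apply] at h2'
      rw [hmatch ω k]
      have hkk : (⟨k-1, by omega⟩ : Fin (m-1)).val + 1 = k := by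
        simp
        omega
      rw [hkk] at h2'
      exact h2'
    · intro h k'
      simp only [Pi.zero_apply]
      rw [Lmap_apply, ← hmatch]
      exact h ((k':ℕ)+1) (by omega) (by have := k'.isLt; omega)
  constructor
  · ext ω
    simp only [Set.mem_setOf_eq, SetLike.mem_coe]
    rw [hVK, hset ω]
  · exact hVrank
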